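/- Let A ∈ ℝ^{n×n} be the tridiagonal discrete Laplacian with diagonal (1,2,...,2,1) and off-diagonals −1, and let S := (A + (1/n²)·I_n)^{-1}. Then for every integer n ≥ 1, the entries S_{1,n} and S_{n,n} satisfy (1 − π²/12)·n ≤ S_{1,n}, S_{n,n} ≤ (1 + π²/12)·n. -/

import Mathlib

/-- The tridiagonal 1-D discrete Laplacian with diagonal (1,2,...,2,1) and off-diagonals -1. -/
def lap (n : ℕ) : Matrix (Fin n) (Fin n) ℝ :=
  Matrix.of fun i j =>
    if i = j then (if (i : ℕ) = 0 ∨ (i : ℕ) = n - 1 then 1 else 2)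
    else if (i : ℕ) + 1 = (j : ℕ) ∨ (j : ℕ) + 1 = (i : ℕ) then -1 else 0

/-- `S = (A + (1/n²) I)⁻¹`. -/
noncomputable def Smat (n : ℕ) : Matrix (Fin n) (Fin n) ℝ :=
  (lap n + ((1 : ℝ) / (n : ℝ)^2) • (1 : Matrix (Fin n) (Fin n) ℝ))⁻¹

/-!
Put `θ = 2 arsinh (1 / (2n))`, so that `sinh (θ / 2) = 1 / (2n)` and `2 cosh θ = 2 + 1 / n²`.
The vector `v k = cosh ((k + 1/2) θ)` solves the recurrence `v (k-1) + v (k+1) = (2 + 1/n²) v k`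
of the interior rows and is even about `-1/2`, which is what the first row asks for. Hence
`(A + n⁻² I) v` vanishes except in the last row, where it is
`cosh ((n + 1/2) θ) - cosh ((n - 1/2) θ) = sinh (nθ) / n`, and the last column of `S` is
`n v / sinh (nθ)`. Finally `nθ ≤ 1` and `sinh (nθ) ≥ 2n sinh (θ/2) = 1`, so every entry of that
column lies in `[n/2, 7n/4]`, because `cosh 1 < 7/4`.
-/

open Real Matrix Finset

theorem Fin.sum_ite_val_eq {M : Type*} [AddCommMonoid M] {n : ℕ} (m : ℕ) (f : ℕ → M) :
    ∑ k : Fin n, (if (k : ℕ) = m then f k else 0) = if m < n then f m else 0 := by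
  simp_rw [Fin.sum_univ_eq_sum_range (fun k => if k = m then f k else 0), sum_ite_eq', mem_range]

/- `lap n` is the Laplacian of the path graph on `Fin n`, except for `n = 1`, where `lap 1 = 1`. -/
theorem lap_mulVec_apply {n : ℕ} (hn : 2 ≤ n) (u : ℕ → ℝ) (i : Fin n) :
    (lap n *ᵥ fun k => u k) i =
      (if (i : ℕ) ≠ 0 then u i - u (i - 1) else 0) +
        (if (i : ℕ) ≠ n - 1 then u i - u (i + 1) else 0) := by
  have hi := i.isLt
  have hrow : ∀ k : Fin n, lap n i k * u k =
      (if (i : ℕ) = 0 ∨ (i : ℕ) = n - 1 then 1 else 2) * (if (k : ℕ) = i then u k else 0) -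
        (if (i : ℕ) ≠ 0 then 1 else 0) * (if (k : ℕ) = i - 1 then u k else 0) -
        (if (k : ℕ) = i + 1 then u k else 0) := by
    intro k
    simp only [lap, of_apply, Fin.ext_iff]
    split_ifs <;> first | omega | ring
  simp only [mulVec, dotProduct, hrow, sum_sub_distrib, ← mul_sum, Fin.sum_ite_val_eq]
  split_ifs <;> first | omega | ring

theorem lap_mulVec_one {n : ℕ} (hn : 2 ≤ n) : lap n *ᵥ 1 = 0 := by
  ext i
  exact (lap_mulVec_apply hn (fun _ => 1) i).trans (by simp)

/- Gershgorin: the off-diagonal entries of `lap n` are `≤ 0` and its rows sum to `0`. -/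
theorem det_lap_add_smul_one_ne_zero {n : ℕ} (hn : 2 ≤ n) {ε : ℝ} (hε : 0 < ε) :
    (lap n + ε • (1 : Matrix (Fin n) (Fin n) ℝ)).det ≠ 0 := by
  refine det_ne_zero_of_sum_row_lt_diag fun i => ?_
  have hoff : ∀ j ∈ univ.erase i,
      ‖(lap n + ε • (1 : Matrix (Fin n) (Fin n) ℝ)) i j‖ = -lap n i j := by
    intro j hj
    have hij : i ≠ j := (ne_of_mem_erase hj).symm
    simp only [Matrix.add_apply, Matrix.smul_apply, one_apply_ne hij, smul_zero, add_zero, lap,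
      of_apply, if_neg hij]
    split_ifs <;> norm_num
  have hrow : ∑ j, lap n i j = 0 := by
    simpa [mulVec, dotProduct] using congrFun (lap_mulVec_one hn) i
  rw [sum_congr rfl hoff, sum_neg_distrib, sum_erase_eq_sub (mem_univ i), hrow]
  simp only [Matrix.add_apply, Matrix.smul_apply, one_apply_eq, smul_eq_mul, mul_one, lap,
    of_apply, if_true]
  split_ifs <;> rw [Real.norm_of_nonneg (by positivity)] <;> linarith

noncomputable def theta (n : ℕ) : ℝ := 2 * arsinh (1 / (2 * n))

theorem sinh_theta_div_two (n : ℕ) : sinh (theta n / 2) = 1 / (2 * n) := by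
  rw [theta, mul_div_cancel_left₀ _ two_ne_zero, sinh_arsinh]

theorem cosh_theta (n : ℕ) : cosh (theta n) = 1 + 1 / (2 * n ^ 2) := by
  rw [show theta n = 2 * (theta n / 2) by ring, cosh_two_mul, cosh_sq, sinh_theta_div_two]
  ring

theorem theta_pos {n : ℕ} (hn : n ≠ 0) : 0 < theta n := by
  have : (0 : ℝ) < 1 / (2 * n) := by positivity
  exact mul_pos two_pos (arsinh_pos_iff.mpr this)

theorem nat_mul_theta_le_one (n : ℕ) : n * theta n ≤ 1 := by
  rcases Nat.eq_zero_or_pos n with rfl | hn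
  · simp
  have hx : (0 : ℝ) ≤ 1 / (2 * n) := by positivity
  have harsinh : arsinh (1 / (2 * n)) ≤ 1 / (2 * n) := by
    simpa using self_le_sinh_iff.mpr (arsinh_nonneg_iff.mpr hx)
  calc n * theta n ≤ n * (2 * (1 / (2 * n))) := by
        unfold theta; gcongr
    _ = 1 := by field_simp

theorem Real.nat_mul_sinh_le_sinh_nat_mul {x : ℝ} (hx : 0 ≤ x) (m : ℕ) :
    m * sinh x ≤ sinh (m * x) := by
  induction m with
  | zero => simp
  | succ m ih =>
    have hsx : 0 ≤ sinh x := sinh_nonneg_iff.mpr hx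
    have hsmx : 0 ≤ sinh (m * x) := sinh_nonneg_iff.mpr (by positivity)
    calc ((m + 1 : ℕ) : ℝ) * sinh x = m * sinh x + sinh x := by push_cast; ring
      _ ≤ sinh (m * x) * cosh x + cosh (m * x) * sinh x :=
        add_le_add (ih.trans (le_mul_of_one_le_right hsmx (one_le_cosh x)))
          (le_mul_of_one_le_left hsx (one_le_cosh _))
      _ = sinh (((m + 1 : ℕ) : ℝ) * x) := by rw [← sinh_add]; push_cast; ring_nf

theorem one_le_sinh_nat_mul_theta {n : ℕ} (hn : n ≠ 0) : 1 ≤ sinh (n * theta n) := by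
  have h := Real.nat_mul_sinh_le_sinh_nat_mul (x := theta n / 2) (by linarith [theta_pos hn])
    (2 * n)
  rw [sinh_theta_div_two] at h
  calc (1 : ℝ) = ((2 * n : ℕ) : ℝ) * (1 / (2 * n)) := by push_cast; field_simp
    _ ≤ sinh (n * theta n) := by convert h using 2; push_cast; ring

theorem Real.cosh_one_lt : cosh 1 < 7 / 4 := by
  rw [cosh_eq, exp_neg]
  have h1 := exp_one_lt_d9
  have h2 := exp_one_gt_d9
  have h3 : (exp 1)⁻¹ < 1 / 2 := by
    rw [inv_lt_comm₀ (exp_pos 1) (by norm_num)]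
    linarith
  linarith

noncomputable def coshMode (n : ℕ) (x : ℝ) : ℝ := cosh ((x + 1 / 2) * theta n)

theorem coshMode_sub_one_add_coshMode_add_one (n : ℕ) (x : ℝ) :
    coshMode n (x - 1) + coshMode n (x + 1) = (2 + 1 / n ^ 2) * coshMode n x := by
  rw [coshMode, coshMode, coshMode, show (x - 1 + 1 / 2) * theta n = (x + 1 / 2) * theta n - theta n
    by ring, show (x + 1 + 1 / 2) * theta n = (x + 1 / 2) * theta n + theta n by ring, cosh_sub,
    cosh_add, cosh_theta]
  ring

theorem coshMode_neg_one (n : ℕ) : coshMode n (-1) = coshMode n 0 := by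
  rw [coshMode, coshMode, ← cosh_neg]
  ring_nf

theorem coshMode_nat_sub_coshMode (n : ℕ) :
    coshMode n n - coshMode n (n - 1) = sinh (n * theta n) / n := by
  rw [coshMode, coshMode, show (n + 1 / 2) * theta n = n * theta n + theta n / 2 by ring,
    show (n - 1 + 1 / 2) * theta n = n * theta n - theta n / 2 by ring, cosh_add, cosh_sub,
    sinh_theta_div_two]
  ring

theorem lap_add_smul_one_mulVec_coshMode {n : ℕ} (hn : 2 ≤ n) :
    (lap n + (1 / (n : ℝ) ^ 2) • (1 : Matrix (Fin n) (Fin n) ℝ)) *ᵥ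
        (fun k : Fin n => coshMode n (k : ℕ)) =
      (sinh (n * theta n) / n) • Pi.single (⟨n - 1, by omega⟩ : Fin n) 1 := by
  ext i
  have hrec := coshMode_sub_one_add_coshMode_add_one n i
  rw [add_mulVec, smul_mulVec, one_mulVec, Pi.add_apply, Pi.smul_apply,
    lap_mulVec_apply hn (fun k : ℕ => coshMode n k), Pi.smul_apply, Pi.single_apply]
  simp only [Fin.ext_iff, smul_eq_mul]
  by_cases h0 : (i : ℕ) = 0
  · have hlast : (i : ℕ) ≠ n - 1 := by omega
    rw [if_neg (not_not.mpr h0), if_pos hlast, if_neg hlast]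
    rw [h0] at hrec ⊢
    rw [Nat.cast_zero, zero_sub, zero_add] at hrec
    rw [Nat.cast_zero, zero_add, Nat.cast_one]
    linear_combination coshMode_neg_one n - hrec
  rw [if_pos h0, Nat.cast_pred (Nat.pos_of_ne_zero h0), Nat.cast_succ]
  by_cases hlast : (i : ℕ) = n - 1
  · have hi : ((i : ℕ) : ℝ) = n - 1 := by rw [hlast, Nat.cast_pred (by omega)]
    rw [if_neg (not_not.mpr hlast), if_pos hlast, hi]
    rw [hi, sub_add_cancel] at hrec
    linear_combination coshMode_nat_sub_coshMode n - hrec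
  · rw [if_pos hlast, if_neg hlast]
    linear_combination -hrec

theorem Smat_apply_last {n : ℕ} (hn : 2 ≤ n) (k : Fin n) :
    Smat n k ⟨n - 1, by omega⟩ = n * coshMode n k / sinh (n * theta n) := by
  have hdet := det_lap_add_smul_one_ne_zero hn (ε := 1 / (n : ℝ) ^ 2) (by positivity)
  have h := congrArg (Smat n *ᵥ ·) (lap_add_smul_one_mulVec_coshMode hn)
  simp only [Smat, mulVec_mulVec, nonsing_inv_mul _ (isUnit_iff_ne_zero.mpr hdet), one_mulVec,
    mulVec_smul, mulVec_single_one] at h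
  have hs : 0 < sinh (n * theta n) := one_pos.trans_le (one_le_sinh_nat_mul_theta (by omega))
  have hn0 : (0 : ℝ) < n := by positivity
  rw [congrFun h k, Pi.smul_apply, col_apply, smul_eq_mul, Smat]
  field_simp

theorem Smat_one : Smat 1 = of fun _ _ => 1 / 2 := by
  rw [Smat]
  refine inv_eq_right_inv ?_
  ext i j
  fin_cases i; fin_cases j
  norm_num [lap, mul_apply]

theorem Smat_apply_mem_Icc_of_eq_last {n : ℕ} (k j : Fin n) (hj : (j : ℕ) = n - 1) :
    Smat n k j ∈ Set.Icc ((n : ℝ) / 2) (7 / 4 * n) := by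
  obtain rfl | hn2 : n = 1 ∨ 2 ≤ n := by omega
  · norm_num [Smat_one]
  rw [show j = ⟨n - 1, by omega⟩ from Fin.ext hj]
  have hk : (k : ℝ) + 1 / 2 ≤ n := by
    have : (k : ℝ) + 1 ≤ n := by exact_mod_cast k.isLt
    linarith
  have hθ := theta_pos (n := n) (by omega)
  have hnθ := nat_mul_theta_le_one n
  have hC1 : 1 ≤ coshMode n k := one_le_cosh _
  have hC : coshMode n k ≤ cosh 1 := by
    rw [coshMode, cosh_le_cosh, abs_of_nonneg (by positivity), abs_one]
    nlinarith
  have hs1 := one_le_sinh_nat_mul_theta (n := n) (by omega)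
  have hs : sinh (n * theta n) ≤ cosh 1 := (sinh_le_sinh.mpr hnθ).trans (sinh_lt_cosh 1).le
  have hcosh := Real.cosh_one_lt
  have hn0 : (0 : ℝ) ≤ n := by positivity
  rw [Smat_apply_last hn2, Set.mem_Icc, le_div_iff₀ (by linarith), div_le_iff₀ (by linarith)]
  constructor <;> nlinarith

theorem Icc_half_subset_Icc_pi_sq {x : ℝ} (hx : 0 ≤ x) :
    Set.Icc (x / 2) (7 / 4 * x) ⊆ Set.Icc ((1 - π ^ 2 / 12) * x) ((1 + π ^ 2 / 12) * x) := by
  have hπ : 9 < π ^ 2 := by nlinarith [pi_gt_three]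
  exact Set.Icc_subset_Icc (by nlinarith) (by nlinarith)

theorem Smat_corner_entries_bounds (n : ℕ) (hn : 1 ≤ n) :
    ((1 - Real.pi^2/12) * n ≤ Smat n ⟨0, by omega⟩ ⟨n - 1, by omega⟩ ∧
      Smat n ⟨0, by omega⟩ ⟨n - 1, by omega⟩ ≤ (1 + Real.pi^2/12) * n) ∧
    ((1 - Real.pi^2/12) * n ≤ Smat n ⟨n - 1, by omega⟩ ⟨n - 1, by omega⟩ ∧
      Smat n ⟨n - 1, by omega⟩ ⟨n - 1, by omega⟩ ≤ (1 + Real.pi^2/12) * n) := by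
  have h := fun k j hj =>
    Icc_half_subset_Icc_pi_sq n.cast_nonneg (Smat_apply_mem_Icc_of_eq_last k j hj)
  refine ⟨h _ _ ?_, h _ _ ?_⟩ <;> rfl
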